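/- arXiv:0911.5151 — 4 statements merged into one kernel-verified Lean document; each statement's English description precedes it below -/
import Mathlib

section
/- If an infinite word w over a finite alphabet has exactly one Abelian factor of some length m ≥ 1 (all factors of length m are anagrams of each other), then w cannot be recurrent and aperiodic; more precisely, if w is recurrent and all its factors of length m are anagrams, then w is periodic. -/
/-- The factor of the infinite word `w` of length `m` starting at position `i`. -/
def factorAt {α : Type*} (w : ℕ → α) (i m : ℕ) : List α :=
  (List.range m).map fun k => w (i + k)

/-- `u` is a (finite) factor of the infinite word `w`. -/
def IsFactor {α : Type*} (w : ℕ → α) (u : List α) : Prop :=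
  ∃ i, u = factorAt w i u.length

/-- `w` is recurrent: every factor occurs infinitely often. -/
def Recurrent {α : Type*} (w : ℕ → α) : Prop :=
  ∀ u, IsFactor w u → ∀ N, ∃ i, N ≤ i ∧ u = factorAt w i u.length

/-- The set of Abelian factors (anagram classes, i.e. multisets) of length `m` of `w`. -/
def abelianFactors {α : Type*} (w : ℕ → α) (m : ℕ) : Set (Multiset α) :=
  {s | ∃ i, s = (factorAt w i m : Multiset α)}

/-- `{a,b}` is an edge of the factor graph of `w` (loops allowed). -/
def HasEdge {α : Type*} (w : ℕ → α) (a b : α) : Prop :=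
  IsFactor w [a, b] ∨ IsFactor w [b, a]

/-- The set of triples associated with the letter `a`: anagram classes of
length-3 factors of `w` whose middle letter is `a`. -/
def triples {α : Type*} (w : ℕ → α) (a : α) : Set (Multiset α) :=
  {s | ∃ x y, IsFactor w [x, a, y] ∧ s = ({x, a, y} : Multiset α)}

/-- The edge sets of cycles of a graph with edge set `E` (loops allowed):
a cycle is either a loop or a cycle on `m ≥ 3` distinct vertices. -/
def cycleEdgeSets {V : Type*} (E : Set (Sym2 V)) : Set (Set (Sym2 V)) :=
  {C | (∃ v, s(v, v) ∈ E ∧ C = {s(v, v)}) ∨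
       (∃ m : ℕ, 3 ≤ m ∧ ∃ f : ZMod m → V, Function.Injective f ∧
          (∀ k, s(f k, f (k + 1)) ∈ E) ∧ C = {e | ∃ k, e = s(f k, f (k + 1))})}

/-- The edge set of the factor graph of a word `w`. -/
def factorGraphEdges {α : Type*} (w : ℕ → α) : Set (Sym2 α) :=
  {e | ∃ a b, e = s(a, b) ∧ HasEdge w a b}

/-!
The factors of length `m` at positions `i` and `i + 1` share the
middle block `w (i + 1) ⋯ w (i + m - 1)`, so if they are anagrams, the letters they do not
share, `w i` and `w (i + m)`, must coincide. Hence `m` is a period of `w`.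
-/

section FactorAt

variable {α : Type*} (w : ℕ → α)

theorem factorAt_succ_eq_cons (i n : ℕ) : factorAt w i (n + 1) = w i :: factorAt w (i + 1) n := by
  simp only [factorAt, List.range_succ_eq_map, List.map_cons, List.map_map, add_zero]
  congr 1
  refine List.map_congr_left fun k _ => ?_
  simp only [Function.comp_apply, Nat.succ_eq_add_one]
  ring_nf

theorem factorAt_succ (i n : ℕ) : factorAt w i (n + 1) = factorAt w i n ++ [w (i + n)] := by
  simp [factorAt, List.range_succ]

theorem apply_add_eq_of_coe_factorAt_eq_coe_factorAt_succ {i n : ℕ}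
    (h : (factorAt w i (n + 1) : Multiset α) = factorAt w (i + 1) (n + 1)) :
    w (i + (n + 1)) = w i := by
  rw [factorAt_succ_eq_cons, factorAt_succ, ← Multiset.cons_coe, ← Multiset.coe_add,
    Multiset.coe_singleton, ← Multiset.cons_zero, Multiset.add_cons, add_zero] at h
  rw [← add_assoc, add_right_comm, (Multiset.cons_inj_left _).mp h]

end FactorAt

theorem stmt1_general {α : Type*} (w : ℕ → α) (m : ℕ) (hm : 1 ≤ m)
    (h : ∀ i j, (factorAt w i m : Multiset α) = (factorAt w j m : Multiset α)) :
    ∃ p, 1 ≤ p ∧ ∀ i, w (i + p) = w i := by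
  obtain ⟨n, rfl⟩ := Nat.exists_eq_add_of_le' hm
  exact ⟨n + 1, hm, fun i => apply_add_eq_of_coe_factorAt_eq_coe_factorAt_succ w (h i (i + 1))⟩

/-- If a recurrent infinite word has all its factors of some length
`m ≥ 1` anagrams of each other, then it is periodic. -/
theorem stmt1 {α : Type*} (w : ℕ → α) (m : ℕ) (hm : 1 ≤ m)
    (hrec : Recurrent w)
    (h : ∀ i j, (factorAt w i m : Multiset α) = (factorAt w j m : Multiset α)) :
    ∃ p, 1 ≤ p ∧ ∀ i, w (i + p) = w i :=
  stmt1_general w m hm h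
end

section
/- Let w be an infinite word over an n-letter alphabet Σ containing all n letters, with exactly n Abelian factors of length 2. Then the graph G on vertex set Σ, with an edge {i,j} (possibly a loop i=j) whenever ij or ji is a factor of w, is connected and has exactly n edges; hence G consists of a spanning tree plus one additional edge and contains a unique cycle (possibly a loop). -/
/-!
Consecutive letters of `w` are joined in the factor graph, so the graph is connected, and
`{a, b} ↦ [a, b]` identifies its edges with the Abelian factors of length 2, so it has `n` edges.
A connected graph on `n` vertices has at least `n - 1` edges and stays connected when an edge of a
cycle is deleted. With `n` edges it therefore has a cycle, since a tree has only `n - 1` edges;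
and two distinct cycles would let us delete two edges while staying connected, leaving `n - 2`.
-/

open SimpleGraph Function Relation

section CycleEdgeSets

variable {V : Type*} {E E' C : Set (Sym2 V)}

lemma subset_of_mem_cycleEdgeSets (hC : C ∈ cycleEdgeSets E) : C ⊆ E := by
  rcases hC with ⟨v, hv, rfl⟩ | ⟨m, -, f, -, hf, rfl⟩
  · simpa using hv
  · rintro _ ⟨k, rfl⟩
    exact hf k

lemma mem_cycleEdgeSets_of_subset (hC : C ∈ cycleEdgeSets E) (hCE' : C ⊆ E') :
    C ∈ cycleEdgeSets E' := by
  rcases hC with ⟨v, -, rfl⟩ | ⟨m, hm, f, hinj, -, rfl⟩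
  · exact .inl ⟨v, hCE' rfl, rfl⟩
  · exact .inr ⟨m, hm, f, hinj, fun k => hCE' ⟨k, rfl⟩, rfl⟩

lemma nonempty_of_mem_cycleEdgeSets (hC : C ∈ cycleEdgeSets E) : C.Nonempty := by
  rcases hC with ⟨v, -, rfl⟩ | ⟨m, -, f, -, -, rfl⟩
  · exact Set.singleton_nonempty _
  · exact ⟨_, 0, rfl⟩

end CycleEdgeSets

lemma ZMod.natCast_ne_zero_of_pos_of_lt {m t : ℕ} (ht : 0 < t) (htm : t < m) :
    (t : ZMod m) ≠ 0 := by
  rw [Ne, ZMod.natCast_eq_zero_iff]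
  exact Nat.not_dvd_of_pos_of_lt ht htm

section ZModCycle

variable {V : Type*} {m : ℕ} {f : ZMod (m + 1) → V}

lemma SimpleGraph.reachable_of_adj_of_ne {H : SimpleGraph V} {k : ZMod (m + 1)}
    (hadj : ∀ j, j ≠ k → H.Adj (f j) (f (j + 1))) : H.Reachable (f (k + 1)) (f k) := by
  have around : ∀ t : ℕ, t ≤ m → H.Reachable (f (k + 1)) (f (k + 1 + t)) := by
    intro t ht
    induction t with
    | zero => simp
    | succ t ih =>
      have hne : k + 1 + t ≠ k := fun h =>
        ZMod.natCast_ne_zero_of_pos_of_lt (m := m + 1) (t := t + 1) t.succ_pos (by omega) (by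
          push_cast
          linear_combination h)
      refine (ih (by omega)).trans (hadj _ hne).reachable |>.trans ?_
      rw [Nat.cast_succ, add_assoc (k + 1)]
  have hk : k + 1 + (m : ZMod (m + 1)) = k := by
    have hzero := ZMod.natCast_self (m + 1)
    push_cast at hzero
    linear_combination hzero
  simpa [hk] using around m le_rfl

lemma ZMod.apply_ne_apply_add_one_of_injective (hm : 1 ≤ m) (hf : Injective f)
    (j : ZMod (m + 1)) : f j ≠ f (j + 1) := fun h =>
  ZMod.natCast_ne_zero_of_pos_of_lt one_pos (by omega : 1 < m + 1)
    (by simpa using (congrArg (· - j) (hf h)).symm)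

lemma ZMod.eq_of_mk_apply_eq_of_injective (hm : 2 ≤ m) (hf : Injective f) {j k : ZMod (m + 1)}
    (h : s(f j, f (j + 1)) = s(f k, f (k + 1))) : j = k := by
  rcases Sym2.eq_iff.mp h with ⟨h₀, -⟩ | ⟨h₀, h₁⟩
  · exact hf h₀
  · refine absurd ?_ (ZMod.natCast_ne_zero_of_pos_of_lt two_pos (by omega : 2 < m + 1))
    push_cast
    linear_combination hf h₁ - hf h₀

end ZModCycle

section CyclesOfConnectedGraphs

variable {V : Type*} {E C C₁ C₂ : Set (Sym2 V)} {e : Sym2 V}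

lemma SimpleGraph.Connected.fromEdgeSet_sdiff_singleton (hconn : (fromEdgeSet E).Connected)
    (hC : C ∈ cycleEdgeSets E) (he : e ∈ C) : (fromEdgeSet (E \ {e})).Connected := by
  rw [fromEdgeSet_sdiff]
  change ((fromEdgeSet E).deleteEdges {e}).Connected
  rcases hC with ⟨v, -, rfl⟩ | ⟨m, hm, f, hinj, hf, rfl⟩
  · obtain rfl := he
    exact hconn.connected_delete_edge_of_not_isBridge (not_not.mpr (Reachable.refl v))
  · obtain ⟨k, rfl⟩ := he
    obtain ⟨m, rfl⟩ : ∃ m', m = m' + 1 := ⟨m - 1, by omega⟩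
    refine hconn.connected_delete_edge_of_not_isBridge (not_not.mpr ?_)
    refine (reachable_of_adj_of_ne fun j hj => ?_).symm
    rw [deleteEdges_adj, fromEdgeSet_adj, Set.mem_singleton_iff]
    exact ⟨⟨hf j, ZMod.apply_ne_apply_add_one_of_injective (by omega) hinj j⟩,
      fun h => hj (ZMod.eq_of_mk_apply_eq_of_injective (by omega) hinj h)⟩

lemma SimpleGraph.Connected.card_le_ncard_add_one [Finite V]
    (hconn : (fromEdgeSet E).Connected) : Nat.card V ≤ E.ncard + 1 := by
  refine hconn.card_vert_le_card_edgeSet_add_one.trans ?_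
  rw [Nat.card_coe_set_eq, edgeSet_fromEdgeSet]
  exact Nat.add_le_add_right (Set.ncard_le_ncard Set.sdiff_subset) 1

lemma SimpleGraph.exists_mem_cycleEdgeSets_of_not_isAcyclic {G : SimpleGraph V}
    (h : ¬G.IsAcyclic) : ∃ C, C ∈ cycleEdgeSets G.edgeSet := by
  obtain ⟨v, p, hp⟩ : ∃ v, ∃ p : G.Walk v v, p.IsCycle := by
    simpa [IsAcyclic] using h
  obtain ⟨m, hm⟩ : ∃ m, p.length = m + 3 := ⟨p.length - 3, by have := hp.three_le_length; omega⟩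
  obtain ⟨c⟩ := (cycleGraph_isContained_iff (by omega)).mpr ⟨v, p, hp, hm⟩
  let φ := (ZMod.finEquiv (m + 3)).symm
  refine ⟨_, .inr ⟨m + 3, by omega, c ∘ φ, c.injective.comp φ.injective, fun k => ?_, rfl⟩⟩
  refine c.toHom.map_adj ?_
  rw [map_add, map_one, cycleGraph_adj]
  exact .inr (add_sub_cancel_left _ _)

lemma SimpleGraph.Connected.exists_mem_cycleEdgeSets [Finite V]
    (hconn : (fromEdgeSet E).Connected) (hcard : Nat.card V ≤ E.ncard) :
    ∃ C, C ∈ cycleEdgeSets E := by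
  by_cases hloop : ∃ v, s(v, v) ∈ E
  · obtain ⟨v, hv⟩ := hloop
    exact ⟨_, .inl ⟨v, hv, rfl⟩⟩
  have hE : (fromEdgeSet E).edgeSet = E := by
    rw [edgeSet_fromEdgeSet, sdiff_eq_left, Set.disjoint_left]
    rintro e he hdiag
    induction e using Sym2.ind with
    | _ a b =>
      rw [Sym2.mem_diagSet, Sym2.mk_isDiag_iff] at hdiag
      exact hloop ⟨a, hdiag ▸ he⟩
  have hcyc : ¬(fromEdgeSet E).IsAcyclic := fun hacyc => by
    have := (isTree_iff_connected_and_card.mp ⟨hconn, hacyc⟩).2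
    rw [Nat.card_coe_set_eq, hE] at this
    omega
  simpa [hE] using exists_mem_cycleEdgeSets_of_not_isAcyclic hcyc

lemma subset_of_mem_cycleEdgeSets_of_connected [Finite V] (hconn : (fromEdgeSet E).Connected)
    (hcard : E.ncard ≤ Nat.card V) (hC₁ : C₁ ∈ cycleEdgeSets E) (hC₂ : C₂ ∈ cycleEdgeSets E) :
    C₁ ⊆ C₂ := by
  -- deleting an edge of `C₁` outside `C₂`, then an edge of `C₂`, would leave a connected
  -- graph with too few edges
  intro e₁ he₁
  by_contra he₁C₂
  have hC₂' : C₂ ∈ cycleEdgeSets (E \ {e₁}) :=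
    mem_cycleEdgeSets_of_subset hC₂ fun e he =>
      ⟨subset_of_mem_cycleEdgeSets hC₂ he, fun h => he₁C₂ (h ▸ he)⟩
  obtain ⟨e₂, he₂⟩ := nonempty_of_mem_cycleEdgeSets hC₂
  have hconn₂ := (hconn.fromEdgeSet_sdiff_singleton hC₁ he₁).fromEdgeSet_sdiff_singleton hC₂' he₂
  have h₁ := Set.ncard_sdiff_singleton_add_one (subset_of_mem_cycleEdgeSets hC₁ he₁)
  have h₂ := Set.ncard_sdiff_singleton_add_one (subset_of_mem_cycleEdgeSets hC₂' he₂)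
  have := hconn₂.card_le_ncard_add_one
  omega

end CyclesOfConnectedGraphs

lemma Relation.reflTransGen_of_surjective {α : Type*} {r : α → α → Prop} [Std.Symm r]
    {w : ℕ → α} (hw : Surjective w) (hstep : ∀ i, r (w i) (w (i + 1))) (a b : α) :
    ReflTransGen r a b := by
  have from_start : ∀ i, ReflTransGen r (w 0) (w i) := fun i => by
    induction i with
    | zero => exact .refl
    | succ i ih => exact ih.tail (hstep i)
  obtain ⟨i, rfl⟩ := hw a
  obtain ⟨j, rfl⟩ := hw b
  exact (symm_of _ (from_start i)).trans (from_start j)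

section FactorGraph

variable {α : Type*} (w : ℕ → α)

lemma factorAt_two (i : ℕ) : factorAt w i 2 = [w i, w (i + 1)] := by
  simp [factorAt, List.range_succ]

lemma isFactor_pair_iff {a b : α} : IsFactor w [a, b] ↔ ∃ i, factorAt w i 2 = [a, b] := by
  simp only [IsFactor, List.length_cons, List.length_nil, eq_comm]

instance : Std.Symm (HasEdge w) := ⟨fun _ _ => Or.symm⟩

lemma hasEdge_apply_apply_add_one (i : ℕ) : HasEdge w (w i) (w (i + 1)) :=
  .inl ((isFactor_pair_iff w).mpr ⟨i, factorAt_two w i⟩)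

lemma mk_mem_factorGraphEdges {a b : α} : s(a, b) ∈ factorGraphEdges w ↔ HasEdge w a b := by
  refine ⟨?_, fun h => ⟨a, b, rfl, h⟩⟩
  rintro ⟨c, d, hcd, h⟩
  rcases Sym2.eq_iff.mp hcd with ⟨rfl, rfl⟩ | ⟨rfl, rfl⟩
  · exact h
  · exact symm_of _ h

lemma connected_fromEdgeSet_factorGraphEdges [Nonempty α] (hw : Surjective w) :
    (fromEdgeSet (factorGraphEdges w)).Connected := by
  refine (connected_iff _).mpr ⟨fun a b => ?_, ‹_›⟩
  rw [reachable_iff_reflTransGen]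
  refine ReflTransGen.lift' id (fun c d hcd => ?_) a b
    (reflTransGen_of_surjective hw (hasEdge_apply_apply_add_one w) a b)
  by_cases h : c = d
  · exact h ▸ .refl
  · exact .single ((fromEdgeSet_adj _).mpr ⟨(mk_mem_factorGraphEdges w).mpr hcd, h⟩)

lemma Sym2.toMultiset_injective : Injective (Sym2.toMultiset (α := α)) := by
  intro e e'
  induction e using Sym2.ind with | _ a b =>
  induction e' using Sym2.ind with | _ c d =>
  intro h
  rcases List.perm_pair.mp (Multiset.coe_eq_coe.mp h) with h | h <;>
    simp only [List.cons.injEq, and_true] at h <;> simp [h.1, h.2]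

lemma image_toMultiset_factorGraphEdges :
    Sym2.toMultiset '' factorGraphEdges w = abelianFactors w 2 := by
  ext s
  constructor
  · rintro ⟨e, he, rfl⟩
    induction e using Sym2.ind with | _ a b =>
    rcases (mk_mem_factorGraphEdges w).mp he with hab | hba
    · obtain ⟨i, hi⟩ := (isFactor_pair_iff w).mp hab
      exact ⟨i, by rw [hi]; rfl⟩
    · obtain ⟨i, hi⟩ := (isFactor_pair_iff w).mp hba
      exact ⟨i, by rw [hi, Sym2.eq_swap]; rfl⟩
  · rintro ⟨i, rfl⟩
    exact ⟨_, (mk_mem_factorGraphEdges w).mpr (hasEdge_apply_apply_add_one w i),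
      by rw [factorAt_two]; rfl⟩

lemma ncard_factorGraphEdges : (factorGraphEdges w).ncard = (abelianFactors w 2).ncard := by
  rw [← image_toMultiset_factorGraphEdges, Set.ncard_image_of_injective _ Sym2.toMultiset_injective]

end FactorGraph

/-- if `w` over an `n`-letter alphabet contains all `n` letters and has
exactly `n` Abelian factors of length 2, then its factor graph is connected and has
exactly `n` edges; hence it contains a unique cycle (possibly a loop). -/
theorem stmt2 (n : ℕ) (w : ℕ → Fin n)
    (hall : ∀ a : Fin n, ∃ i, w i = a)
    (hcomp : (abelianFactors w 2).ncard = n) :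
    (∀ u v : Fin n, Relation.ReflTransGen (fun a b => HasEdge w a b) u v) ∧
    (factorGraphEdges w).ncard = n ∧
    (∃! C, C ∈ cycleEdgeSets (factorGraphEdges w)) := by
  have : Nonempty (Fin n) := ⟨w 0⟩
  have hconn := connected_fromEdgeSet_factorGraphEdges w hall
  have hcard : (factorGraphEdges w).ncard = Nat.card (Fin n) := by
    rw [ncard_factorGraphEdges, hcomp, Nat.card_fin]
  obtain ⟨C, hC⟩ := hconn.exists_mem_cycleEdgeSets hcard.ge
  refine ⟨reflTransGen_of_surjective hall (hasEdge_apply_apply_add_one w),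
    hcard.trans (Nat.card_fin n), C, hC, fun C' hC' => ?_⟩
  exact (subset_of_mem_cycleEdgeSets_of_connected hconn hcard.le hC' hC).antisymm
    (subset_of_mem_cycleEdgeSets_of_connected hconn hcard.le hC hC')
end

section
/- Let w be a recurrent infinite word with factor graph G, and suppose a letter a has two distinct neighbours b and c in G. Then either [bac] ∈ T(a) or |T(a)| ≥ 2. -/
section

variable {α : Type*}

theorem factorAt_succ_left (w : ℕ → α) (i m : ℕ) :
    factorAt w i (m + 1) = w i :: factorAt w (i + 1) m := by
  simp only [factorAt, List.range_succ_eq_map, List.map_cons, List.map_map, Nat.add_zero]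
  congr 1
  exact List.map_congr_left fun k _ => congrArg w (by omega)

theorem factorAt_succ_right (w : ℕ → α) (i m : ℕ) :
    factorAt w i (m + 1) = factorAt w i m ++ [w (i + m)] := by
  simp [factorAt, List.range_succ]

theorem IsFactor.exists_append_singleton {w : ℕ → α} {u : List α} (hu : IsFactor w u) :
    ∃ y, IsFactor w (u ++ [y]) := by
  obtain ⟨i, hi⟩ := hu
  refine ⟨w (i + u.length), i, ?_⟩
  rw [List.length_append, List.length_singleton, factorAt_succ_right, ← hi]

theorem Recurrent.exists_isFactor_cons {w : ℕ → α} (hw : Recurrent w) {u : List α}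
    (hu : IsFactor w u) : ∃ x, IsFactor w (x :: u) := by
  obtain ⟨i, hi, hu⟩ := hw u hu 1
  obtain ⟨j, rfl⟩ := Nat.exists_eq_add_of_le' hi
  exact ⟨w j, j, by rw [List.length_cons, factorAt_succ_left, ← hu]⟩

theorem Recurrent.exists_mem_triples_of_hasEdge {w : ℕ → α} (hw : Recurrent w) {a b : α}
    (hab : HasEdge w a b) : ∃ s ∈ triples w a, b ∈ s := by
  rcases hab with hab | hba
  · obtain ⟨x, hx⟩ := hw.exists_isFactor_cons hab
    exact ⟨{x, a, b}, ⟨x, b, hx, rfl⟩, by simp⟩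
  · obtain ⟨y, hy⟩ := hba.exists_append_singleton
    exact ⟨{b, a, y}, ⟨b, y, hy, rfl⟩, by simp⟩

theorem triple_eq_of_mem_of_mem {a b c x y : α} (hba : b ≠ a) (hca : c ≠ a) (hbc : b ≠ c)
    (hb : b ∈ ({x, a, y} : Multiset α)) (hc : c ∈ ({x, a, y} : Multiset α)) :
    ({x, a, y} : Multiset α) = {b, a, c} := by
  simp only [Multiset.insert_eq_cons, Multiset.mem_cons, Multiset.mem_singleton] at hb hc
  rcases hb with rfl | rfl | rfl <;> rcases hc with rfl | rfl | rfl <;>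
    try first | contradiction | rfl
  calc ({c, a, b} : Multiset α) = a ::ₘ {c, b} := Multiset.cons_swap c a {b}
    _ = a ::ₘ {b, c} := by rw [Multiset.pair_comm]
    _ = {b, a, c} := Multiset.cons_swap a b {c}

end

/-- if a letter `a` has two distinct neighbours `b` and `c` in the
factor graph of a recurrent word `w`, then `[bac] ∈ T(a)` or `|T(a)| ≥ 2`. -/
theorem stmt7 {α : Type*} (w : ℕ → α) (hrec : Recurrent w) (a b c : α)
    (hbc : b ≠ c)
    (hb : b ≠ a ∧ HasEdge w a b)
    (hc : c ≠ a ∧ HasEdge w a c) :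
    ({b, a, c} : Multiset α) ∈ triples w a ∨
    ∃ s ∈ triples w a, ∃ t ∈ triples w a, s ≠ t := by
  obtain ⟨s, hs, hbs⟩ := hrec.exists_mem_triples_of_hasEdge hb.2
  obtain ⟨t, ht, hct⟩ := hrec.exists_mem_triples_of_hasEdge hc.2
  by_cases hst : s = t
  · subst hst
    obtain ⟨x, y, hxy, rfl⟩ := hs
    left
    rw [← triple_eq_of_mem_of_mem hb.1 hc.1 hbc hbs hct]
    exact ⟨x, y, hxy, rfl⟩
  · exact Or.inr ⟨s, hs, t, ht, hst⟩
end

section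
/- Let n ≥ 4 and let w be a recurrent infinite word over {1,...,n} whose set of length-2 factors is contained in {1k, k1 : 1 ≤ k ≤ n} (i.e., the factor graph is a star centered at 1 together with the loop 11), and suppose 111 is a factor of w. If w has at most n Abelian factors of every length, a contradiction follows: w has at least n+1 distinct Abelian factors of some length. -/
/-! Let `g` be the least number of `1`s separating two consecutive non-`1` letters; the star
condition gives `g ≥ 1`. Each letter `c ≥ 2` recurs, and around every occurrence of it there
are at least `g` ones on either side, so `1^(m-1) c` is an Abelian factor of length
`m ∈ {g + 2, g + 3}` for all `n - 1` letters `c` (for `m = g + 3` one needs `g ≥ 2`).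
Two more classes, with a different number of `1`s, come from one of two cases.
If `1^(g+2)` is a factor, take `m = g + 2`: the classes of `1^(g+2)` and of `c 1^g d` at a
gap of size `g`. Otherwise `g ≥ 2` because `111` is a factor, every gap has size `g` or
`g + 1`, and each letter `c` lies in a factor with class `1^(g+1) c d`; for `m = g + 3`,
two letters give two different such classes. -/

variable {α : Type*}

theorem factorAt_add (w : ℕ → α) (i a b : ℕ) :
    factorAt w i (a + b) = factorAt w i a ++ factorAt w (i + a) b := by
  simp [factorAt, List.range_add, Nat.add_assoc]

theorem factorAt_one (w : ℕ → α) (i : ℕ) : factorAt w i 1 = [w i] := by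
  simp [factorAt]

theorem factorAt_eq_replicate_iff {w : ℕ → α} {i m : ℕ} {x : α} :
    factorAt w i m = List.replicate m x ↔ ∀ k < m, w (i + k) = x := by
  simp [factorAt, List.eq_replicate_iff]

theorem pair_eq_factorAt_iff {w : ℕ → α} {a b : α} {i : ℕ} :
    [a, b] = factorAt w i [a, b].length ↔ w i = a ∧ w (i + 1) = b := by
  simp [factorAt, List.range_succ, eq_comm]

theorem Recurrent.exists_ge_eq_of_hasEdge {w : ℕ → α} (hw : Recurrent w) {a b : α}
    (h : HasEdge w a b) (N : ℕ) : ∃ i, N ≤ i ∧ w i = b := by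
  rcases h with h | h
  · obtain ⟨i, hi, hab⟩ := hw _ h N
    exact ⟨i + 1, by omega, (pair_eq_factorAt_iff.1 hab).2⟩
  · obtain ⟨i, hi, hba⟩ := hw _ h N
    exact ⟨i, hi, (pair_eq_factorAt_iff.1 hba).1⟩

theorem abelianFactors_finite {w : ℕ → α} {s : Finset α} (hw : ∀ i, w i ∈ s) (m : ℕ) :
    (abelianFactors w m).Finite := by
  classical
  refine ((s.sym m).finite_toSet.image ((↑) : Sym α m → Multiset α)).subset ?_
  rintro _ ⟨i, rfl⟩
  refine ⟨⟨factorAt w i m, by simp [factorAt]⟩, Finset.mem_sym_iff.2 fun a ha => ?_, rfl⟩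
  obtain ⟨k, -, rfl⟩ := List.mem_map.1 (Multiset.mem_coe.1 ha)
  exact hw _

theorem card_add_two_le_ncard [DecidableEq α] {S : Set (Multiset α)} (hS : S.Finite) {o : α}
    {L : Finset α} (hL : o ∉ L) {m : ℕ} (hsingle : ∀ c ∈ L, c ::ₘ Multiset.replicate m o ∈ S)
    {s t : Multiset α} (hs : s ∈ S) (ht : t ∈ S) (hst : s ≠ t)
    (hso : s.count o ≠ m) (hto : t.count o ≠ m) : L.card + 2 ≤ S.ncard := by
  set B := L.image fun c => c ::ₘ Multiset.replicate m o
  have hB : B.card = L.card :=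
    Finset.card_image_of_injective _ fun a b h => (Multiset.cons_inj_left _).1 h
  have hcount : ∀ u ∈ B, u.count o = m := by
    simp only [B, Finset.mem_image]
    rintro _ ⟨c, hc, rfl⟩
    rw [Multiset.count_cons_of_ne (ne_of_mem_of_not_mem hc hL).symm, Multiset.count_replicate_self]
  have htB : t ∉ B := fun h => hto (hcount t h)
  have hsB : s ∉ insert t B := by
    rw [Finset.mem_insert, not_or]
    exact ⟨hst, fun h => hso (hcount s h)⟩
  calc L.card + 2 = (insert s (insert t B)).card := by
        rw [Finset.card_insert_of_notMem hsB, Finset.card_insert_of_notMem htB, hB]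
    _ ≤ S.ncard := by
      rw [← Set.ncard_coe_finset]
      refine Set.ncard_le_ncard ?_ hS
      simp only [Finset.coe_insert, Set.insert_subset_iff]
      refine ⟨hs, ht, ?_⟩
      simp only [B, Finset.coe_image, Set.image_subset_iff]
      exact hsingle

def IsGap (w : ℕ → α) (o : α) (i h : ℕ) : Prop :=
  w i ≠ o ∧ factorAt w (i + 1) h = List.replicate h o ∧ w (i + h + 1) ≠ o

noncomputable def minGap (w : ℕ → α) (o : α) : ℕ :=
  sInf {h | ∃ i, IsGap w o i h}

section Gaps

variable {w : ℕ → α} {o : α}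

theorem IsGap.one_le (hsep : ∀ i, w i = o ∨ w (i + 1) = o) {i h : ℕ} (hgap : IsGap w o i h) :
    1 ≤ h := by
  rcases Nat.eq_zero_or_pos h with rfl | hpos
  · exact (hsep i).elim (absurd · hgap.1) (absurd · hgap.2.2)
  · exact hpos

theorem exists_isGap_le {i t : ℕ} (hi : w i ≠ o) (ht : w (i + t + 1) ≠ o) :
    ∃ h ≤ t, IsGap w o i h := by
  classical
  have hex : ∃ h, w (i + h + 1) ≠ o := ⟨t, ht⟩
  refine ⟨Nat.find hex, Nat.find_min' hex ht, hi, ?_, Nat.find_spec hex⟩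
  rw [factorAt_eq_replicate_iff]
  intro k hk
  simpa [Nat.add_right_comm] using Nat.find_min hex hk

theorem minGap_le {i h : ℕ} (hgap : IsGap w o i h) : minGap w o ≤ h :=
  Nat.sInf_le ⟨i, hgap⟩

theorem minGap_le_of_ne {i t : ℕ} (hi : w i ≠ o) (ht : w (i + t + 1) ≠ o) : minGap w o ≤ t :=
  let ⟨_, hle, hgap⟩ := exists_isGap_le hi ht
  (minGap_le hgap).trans hle

theorem exists_isGap_minGap {i j : ℕ} (hi : w i ≠ o) (hij : i < j) (hj : w j ≠ o) :
    ∃ k, IsGap w o k (minGap w o) := by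
  obtain ⟨h, -, hgap⟩ :=
    exists_isGap_le (t := j - i - 1) hi (by rwa [show i + (j - i - 1) + 1 = j by omega])
  exact Nat.sInf_mem (s := {h | ∃ i, IsGap w o i h}) ⟨h, i, hgap⟩

theorem factorAt_succ_eq_replicate {i q : ℕ} (hi : w i ≠ o) (hq : q ≤ minGap w o) :
    factorAt w (i + 1) q = List.replicate q o := by
  rw [factorAt_eq_replicate_iff]
  intro k hk
  by_contra hne
  have := minGap_le_of_ne (t := k) hi (by simpa [Nat.add_right_comm] using hne)
  omega

theorem factorAt_sub_eq_replicate {i p : ℕ} (hi : w i ≠ o) (hp : p ≤ minGap w o) (hpi : p ≤ i) :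
    factorAt w (i - p) p = List.replicate p o := by
  rw [factorAt_eq_replicate_iff]
  intro k hk
  by_contra hne
  have := minGap_le_of_ne (t := p - k - 1) hne
    (by rwa [show i - p + k + (p - k - 1) + 1 = i by omega])
  omega

theorem cons_replicate_mem_abelianFactors {i p q : ℕ} (hi : w i ≠ o) (hp : p ≤ minGap w o)
    (hpi : p ≤ i) (hq : q ≤ minGap w o) :
    w i ::ₘ Multiset.replicate (p + q) o ∈ abelianFactors w (p + 1 + q) := by
  refine ⟨i - p, ?_⟩
  rw [factorAt_add, factorAt_add, factorAt_sub_eq_replicate hi hp hpi, Nat.sub_add_cancel hpi,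
    show i - p + (p + 1) = i + 1 by omega, factorAt_one, factorAt_succ_eq_replicate hi hq]
  simp only [← Multiset.coe_add, Multiset.coe_replicate, Multiset.coe_singleton,
    Multiset.replicate_add, ← Multiset.singleton_add]
  abel

theorem IsGap.cons_cons_replicate_mem_abelianFactors {i h p : ℕ} (hgap : IsGap w o i h)
    (hp : p ≤ minGap w o) (hpi : p ≤ i) :
    w i ::ₘ w (i + h + 1) ::ₘ Multiset.replicate (p + h) o ∈ abelianFactors w (p + h + 2) := by
  refine ⟨i - p, ?_⟩
  rw [show p + h + 2 = p + (1 + h + 1) by omega, factorAt_add, factorAt_add, factorAt_add,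
    factorAt_sub_eq_replicate hgap.1 hp hpi, Nat.sub_add_cancel hpi, factorAt_one, hgap.2.1,
    factorAt_one, show i + (1 + h) = i + h + 1 by omega]
  simp only [← Multiset.coe_add, Multiset.coe_replicate, Multiset.coe_singleton,
    Multiset.replicate_add, ← Multiset.singleton_add]
  abel

theorem card_add_two_le_ncard_of_run [DecidableEq α] {L : Finset α} (hL : o ∉ L)
    (hocc : ∀ c ∈ L, ∀ N, ∃ i, N ≤ i ∧ w i = c)
    (hfin : (abelianFactors w (minGap w o + 2)).Finite) (hg : 1 ≤ minGap w o) {j : ℕ}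
    (hgap : IsGap w o j (minGap w o)) {i : ℕ}
    (hrun : factorAt w i (minGap w o + 2) = List.replicate (minGap w o + 2) o) :
    L.card + 2 ≤ (abelianFactors w (minGap w o + 2)).ncard := by
  set g := minGap w o
  have hcount : (w j ::ₘ w (j + g + 1) ::ₘ Multiset.replicate g o).count o = g := by
    rw [Multiset.count_cons_of_ne hgap.1.symm, Multiset.count_cons_of_ne hgap.2.2.symm,
      Multiset.count_replicate_self]
  refine card_add_two_le_ncard hfin hL (m := g + 1) (s := Multiset.replicate (g + 2) o)
    (t := w j ::ₘ w (j + g + 1) ::ₘ Multiset.replicate g o) ?_ ⟨i, by rw [hrun]; rfl⟩ ?_ ?_ ?_ ?_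
  · intro c hc
    obtain ⟨k, hk, rfl⟩ := hocc c hc 1
    have := cons_replicate_mem_abelianFactors (ne_of_mem_of_not_mem hc hL) hg hk le_rfl
    rwa [show 1 + g = g + 1 by omega, show 1 + 1 + g = g + 2 by omega] at this
  · simpa using hgap.cons_cons_replicate_mem_abelianFactors (Nat.zero_le _) (Nat.zero_le j)
  · intro h
    have := congrArg (Multiset.count o) h
    rw [hcount, Multiset.count_replicate_self] at this
    omega
  · rw [Multiset.count_replicate_self]
    omega
  · omega

theorem card_add_two_le_ncard_of_forall_ne_replicate [DecidableEq α] {L : Finset α}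
    (hL : o ∉ L) (hL3 : 2 < L.card) (hocc : ∀ c ∈ L, ∀ N, ∃ i, N ≤ i ∧ w i = c)
    (hfin : (abelianFactors w (minGap w o + 3)).Finite) (hg : 2 ≤ minGap w o)
    (hrun : ∀ i, factorAt w i (minGap w o + 2) ≠ List.replicate (minGap w o + 2) o) :
    L.card + 2 ≤ (abelianFactors w (minGap w o + 3)).ncard := by
  set g := minGap w o
  have hne : ∀ c ∈ L, c ≠ o := fun c hc => ne_of_mem_of_not_mem hc hL
  -- no run of `g + 2` letters `o` forces the gap after each letter to have size `g` or `g + 1`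
  have hpair : ∀ c ∈ L, ∃ d, d ≠ o ∧
      c ::ₘ d ::ₘ Multiset.replicate (g + 1) o ∈ abelianFactors w (g + 3) := by
    intro c hc
    obtain ⟨i, hi, rfl⟩ := hocc c hc 1
    obtain ⟨k, hk, hwk⟩ : ∃ k < g + 2, w (i + 1 + k) ≠ o := by
      simpa [factorAt_eq_replicate_iff] using hrun (i + 1)
    obtain ⟨h, hhk, hgap⟩ := exists_isGap_le (t := k) (hne _ hc) (by rwa [Nat.add_right_comm])
    have hgh := minGap_le hgap
    have := hgap.cons_cons_replicate_mem_abelianFactors (p := g + 1 - h) (by omega) (by omega)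
    refine ⟨_, hgap.2.2, ?_⟩
    rwa [show g + 1 - h + h = g + 1 by omega] at this
  have hcount : ∀ c d, c ≠ o → d ≠ o →
      (c ::ₘ d ::ₘ Multiset.replicate (g + 1) o).count o ≠ g + 2 := by
    intro c d hc hd
    rw [Multiset.count_cons_of_ne hc.symm, Multiset.count_cons_of_ne hd.symm,
      Multiset.count_replicate_self]
    omega
  obtain ⟨a, ha⟩ := Finset.card_pos.1 (by omega : 0 < L.card)
  obtain ⟨d, hdo, hda⟩ := hpair a ha
  obtain ⟨b, hb, hbd⟩ :=
    Finset.exists_mem_ne (s := L.erase a) (by rw [Finset.card_erase_of_mem ha]; omega) d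
  obtain ⟨hba, hb⟩ := Finset.mem_erase.1 hb
  obtain ⟨e, heo, heb⟩ := hpair b hb
  refine card_add_two_le_ncard hfin hL (m := g + 2) ?_ hda heb ?_ (hcount _ _ (hne a ha) hdo)
    (hcount _ _ (hne b hb) heo)
  · intro c hc
    obtain ⟨k, hk, rfl⟩ := hocc c hc 2
    have := cons_replicate_mem_abelianFactors (hne _ hc) hg hk le_rfl
    rwa [show 2 + g = g + 2 by omega, show 2 + 1 + g = g + 3 by omega] at this
  · intro h
    have hmem : b ∈ a ::ₘ d ::ₘ Multiset.replicate (g + 1) o := h ▸ Multiset.mem_cons_self _ _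
    simp [hba, hbd, Multiset.mem_replicate, hne b hb] at hmem

end Gaps

theorem exists_card_add_two_le_ncard_abelianFactors [DecidableEq α] {w : ℕ → α} {o : α}
    {L : Finset α} (hL : o ∉ L) (hL3 : 2 < L.card) (hocc : ∀ c ∈ L, ∀ N, ∃ i, N ≤ i ∧ w i = c)
    (hfin : ∀ m, (abelianFactors w m).Finite) (hsep : ∀ i, w i = o ∨ w (i + 1) = o) {i : ℕ}
    (hooo : factorAt w i 3 = List.replicate 3 o) :
    ∃ m, 1 ≤ m ∧ L.card + 2 ≤ (abelianFactors w m).ncard := by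
  obtain ⟨a, ha⟩ := Finset.card_pos.1 (by omega : 0 < L.card)
  have hao := ne_of_mem_of_not_mem ha hL
  obtain ⟨i₁, -, rfl⟩ := hocc a ha 0
  obtain ⟨i₂, hi₁₂, hi₂⟩ := hocc _ ha (i₁ + 1)
  obtain ⟨j, hgap⟩ := exists_isGap_minGap hao (Nat.lt_of_succ_le hi₁₂) (hi₂ ▸ hao)
  by_cases hrun : ∃ i, factorAt w i (minGap w o + 2) = List.replicate (minGap w o + 2) o
  · obtain ⟨i, hrun⟩ := hrun
    exact ⟨_, by omega,
      card_add_two_le_ncard_of_run hL hocc (hfin _) (hgap.one_le hsep) hgap hrun⟩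
  · have hg : 2 ≤ minGap w o := by
      by_contra! hg
      exact hrun ⟨i, factorAt_eq_replicate_iff.2 fun k hk =>
        factorAt_eq_replicate_iff.1 hooo k (by omega)⟩
    exact ⟨_, by omega,
      card_add_two_le_ncard_of_forall_ne_replicate hL hL3 hocc (hfin _) hg (not_exists.1 hrun)⟩

/-- let `w` be recurrent over `{1,…,n}` (`n ≥ 4`) whose factor graph
is the star centered at `1` together with the loop `11`, with `111` a factor of `w`.
If `w` has at most `n` Abelian factors of every length, a contradiction follows. -/
theorem stmt10 (n : ℕ) (hn : 4 ≤ n) (w : ℕ → ℕ)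
    (hrange : ∀ i, w i ∈ Finset.Icc 1 n)
    (hrec : Recurrent w)
    (hstar : ∀ a b, IsFactor w [a, b] → a = 1 ∨ b = 1)
    (hedges : ∀ k, 2 ≤ k → k ≤ n → HasEdge w 1 k)
    (h111 : IsFactor w [1, 1, 1])
    (hcomp : ∀ m, 1 ≤ m → (abelianFactors w m).ncard ≤ n) :
    False := by
  have hocc : ∀ c ∈ Finset.Icc 2 n, ∀ N, ∃ i, N ≤ i ∧ w i = c := fun c hc =>
    hrec.exists_ge_eq_of_hasEdge (hedges c (Finset.mem_Icc.1 hc).1 (Finset.mem_Icc.1 hc).2)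
  have hsep : ∀ i, w i = 1 ∨ w (i + 1) = 1 := fun i =>
    hstar _ _ ⟨i, pair_eq_factorAt_iff.2 ⟨rfl, rfl⟩⟩
  obtain ⟨i, h111⟩ := h111
  obtain ⟨m, hm, hcard⟩ := exists_card_add_two_le_ncard_abelianFactors (by simp)
    (by simp; omega) hocc (abelianFactors_finite hrange) hsep h111.symm
  have := hcomp m hm
  rw [Nat.card_Icc] at hcard
  omega
end
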